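/- For n ≥ 1 let A_n(x) = Σ_{k=0}^{n−1} (−1)^k · binom(−1/2, k) · x^{2k} be the (2n−2)-th order Taylor polynomial of A(x) = (1−x²)^{−1/2} at 0 (note each coefficient (−1)^k binom(−1/2,k) is nonnegative). Then: (i) for every n ≥ 1 and every x ∈ (−1, 1), 0 ≤ A_n(x) ≤ (1−x²)^{−1/2}, and hence √(1−x²) · A_n(x) ≤ 1 for all x ∈ [−1, 1]; (ii) for every 0 < ε ≤ 1 and 0 < δ ≤ 1, if n ≥ (2δ)^{−1} · log(1/(ε√δ)), then |A_n(x) − (1−x²)^{−1/2}| ≤ ε for all x ∈ [−1+δ, 1−δ]. -/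

import Mathlib

open Finset

/-- The generalized binomial coefficient `binom(α, k) = (∏_{i=0}^{k−1} (α − i)) / k!`. -/
noncomputable def gbinom (α : ℝ) (k : ℕ) : ℝ :=
  (∏ i ∈ Finset.range k, (α - i)) / (Nat.factorial k)

/-- The `(2n−2)`-th order Taylor polynomial of `A(x) = (1−x²)^{−1/2}` at `0`:
`A_n(x) = Σ_{k=0}^{n−1} (−1)^k binom(−1/2, k) x^{2k}`. -/
noncomputable def Apoly (n : ℕ) (x : ℝ) : ℝ :=
  ∑ k ∈ Finset.range n, (-1 : ℝ) ^ k * gbinom (-1/2) k * x ^ (2 * k)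

namespace Stmt15

noncomputable def c (k : ℕ) : ℝ := (-1)^k * gbinom (-1/2) k

lemma c_zero : c 0 = 1 := by simp [c, gbinom]

lemma c_succ (k : ℕ) : c (k+1) = c k * (((k:ℝ) + 1/2) / ((k:ℝ)+1)) := by
  have hf : (Nat.factorial k : ℝ) ≠ 0 := by
    exact_mod_cast (Nat.factorial_pos k).ne'
  have hk : (k : ℝ) + 1 ≠ 0 := by positivity
  simp only [c, gbinom, Finset.prod_range_succ, Nat.factorial_succ, pow_succ]
  push_cast
  field_simp
  ring

lemma c_pos (k : ℕ) : 0 < c k := by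
  induction k with
  | zero => rw [c_zero]; norm_num
  | succ k ih =>
    rw [c_succ]
    have h : (0:ℝ) < ((k:ℝ) + 1/2) / ((k:ℝ)+1) := by positivity
    positivity

lemma c_succ_le (k : ℕ) : c (k+1) ≤ c k := by
  rw [c_succ]
  have h1 : ((k:ℝ) + 1/2) / ((k:ℝ)+1) ≤ 1 := by
    rw [div_le_one (by positivity)]; linarith
  calc c k * (((k:ℝ) + 1/2) / ((k:ℝ)+1)) ≤ c k * 1 :=
        mul_le_mul_of_nonneg_left h1 (c_pos k).le
    _ = c k := mul_one _

lemma c_anti : Antitone c := antitone_nat_of_succ_le c_succ_le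

lemma c_le_one (k : ℕ) : c k ≤ 1 := by
  have := c_anti (Nat.zero_le k); rwa [c_zero] at this

lemma c_rec (k : ℕ) : ((k:ℝ)+1) * c (k+1) = ((k:ℝ) + 1/2) * c k := by
  rw [c_succ]
  have hk : (k : ℝ) + 1 ≠ 0 := by positivity
  field_simp

noncomputable def P (n : ℕ) (t : ℝ) : ℝ := ∑ k ∈ range n, c k * t^k

lemma Apoly_eq (n : ℕ) (x : ℝ) : Apoly n x = P n (x^2) := by
  unfold Apoly P c
  refine Finset.sum_congr rfl fun k _ => ?_
  rw [pow_mul]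

lemma P_nonneg (n : ℕ) {t : ℝ} (ht : 0 ≤ t) : 0 ≤ P n t :=
  Finset.sum_nonneg fun k _ => mul_nonneg (c_pos k).le (pow_nonneg ht k)

lemma P_zero {n : ℕ} (hn : 1 ≤ n) : P n 0 = 1 := by
  unfold P
  rw [Finset.sum_eq_single_of_mem 0 (Finset.mem_range.2 hn)]
  · simp [c_zero]
  · intro k _ hk
    simp [zero_pow hk]

noncomputable def D (n : ℕ) (t : ℝ) : ℝ := ∑ k ∈ range n, c k * ((k:ℝ) * t^(k-1))

lemma hasDerivAt_P (n : ℕ) (t : ℝ) : HasDerivAt (fun s => P n s) (D n t) t := by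
  unfold P D
  exact HasDerivAt.fun_sum fun k _ => (hasDerivAt_pow k t).const_mul (c k)

lemma key (n : ℕ) (s : ℝ) :
    (1 - s) * D n s - P n s / 2 = -((n:ℝ) * c n * s^(n-1)) := by
  induction n with
  | zero => simp [P, D]
  | succ n ih =>
    have hrec := c_rec n
    have hs : (n:ℝ) * (s * s^(n-1)) = (n:ℝ) * s^n := by
      cases n with
      | zero => simp
      | succ m =>
        congr 1
        rw [Nat.succ_sub_one, ← pow_succ']
    simp only [P, D, Finset.sum_range_succ, Nat.succ_sub_one] at *
    push_cast at *
    linear_combination ih - c n * hs + s^n * hrec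

lemma hasDerivAt_Q (n : ℕ) {s : ℝ} (hs : s < 1) :
    HasDerivAt (fun t => Real.sqrt (1-t) * P n t)
      (-((n:ℝ) * c n * s^(n-1)) / Real.sqrt (1-s)) s := by
  have h1 : (0:ℝ) < 1 - s := by linarith
  have hsqne : Real.sqrt (1-s) ≠ 0 := (Real.sqrt_pos.2 h1).ne'
  have hsq : HasDerivAt (fun t : ℝ => Real.sqrt (1-t)) ((-1) / (2 * Real.sqrt (1-s))) s :=
    HasDerivAt.sqrt ((hasDerivAt_id s).const_sub 1) h1.ne'
  have h := hsq.fun_mul (hasDerivAt_P n s)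
  refine h.congr_deriv (Eq.symm ?_)
  have h3 : Real.sqrt (1-s) * Real.sqrt (1-s) = 1 - s := Real.mul_self_sqrt h1.le
  have hkey := key n s
  rw [div_eq_iff hsqne]
  field_simp
  linear_combination (-2) * hkey + (-2 * D n s) * h3

lemma Q_bound (n : ℕ) (hn : 1 ≤ n) {t : ℝ} (ht0 : 0 ≤ t) (ht1 : t < 1) :
    |Real.sqrt (1-t) * P n t - 1| ≤ (n:ℝ) * c n * t^n / Real.sqrt (1-t) := by
  have h1 : (0:ℝ) < 1 - t := by linarith
  have hsqpos : 0 < Real.sqrt (1-t) := Real.sqrt_pos.2 h1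
  set C : ℝ := (n:ℝ) * c n * t^(n-1) / Real.sqrt (1-t) with hC
  have hbound := norm_image_sub_le_of_norm_deriv_le_segment'
    (f := fun u => Real.sqrt (1-u) * P n u)
    (f' := fun u => -((n:ℝ) * c n * u^(n-1)) / Real.sqrt (1-u))
    (a := 0) (b := t) (C := C)
    (fun x hx => ((hasDerivAt_Q n (lt_of_le_of_lt hx.2 ht1)).hasDerivWithinAt))
    (fun x hx => by
      rcases hx with ⟨hx0, hxt⟩
      have hx1 : x < 1 := lt_trans hxt ht1
      have hx1' : (0:ℝ) < 1 - x := by linarith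
      have hnum : (0:ℝ) ≤ (n:ℝ) * c n * x^(n-1) :=
        mul_nonneg (mul_nonneg (Nat.cast_nonneg n) (c_pos n).le) (pow_nonneg hx0 _)
      rw [Real.norm_eq_abs, abs_div, abs_neg, abs_of_nonneg hnum,
        abs_of_nonneg (Real.sqrt_nonneg _)]
      exact div_le_div₀
        (mul_nonneg (mul_nonneg (Nat.cast_nonneg n) (c_pos n).le) (pow_nonneg ht0 _))
        (mul_le_mul_of_nonneg_left (pow_le_pow_left₀ hx0 hxt.le _)
          (mul_nonneg (Nat.cast_nonneg n) (c_pos n).le))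
        hsqpos (Real.sqrt_le_sqrt (by linarith)))
    t (Set.mem_Icc.2 ⟨ht0, le_refl t⟩)
  simp only [Real.norm_eq_abs, sub_zero] at hbound
  have hQ0 : Real.sqrt 1 * P n 0 = 1 := by
    rw [P_zero hn, Real.sqrt_one, mul_one]
  rw [hQ0] at hbound
  calc |Real.sqrt (1-t) * P n t - 1| ≤ C * t := hbound
    _ = (n:ℝ) * c n * (t^(n-1) * t) / Real.sqrt (1-t) := by rw [hC]; ring
    _ = (n:ℝ) * c n * t^n / Real.sqrt (1-t) := by
        rw [← pow_succ, Nat.sub_add_cancel hn]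

lemma P_tendsto {t : ℝ} (ht0 : 0 ≤ t) (ht1 : t < 1) :
    Filter.Tendsto (fun n => P n t) Filter.atTop (nhds ((Real.sqrt (1-t))⁻¹)) := by
  have h1 : (0:ℝ) < 1 - t := by linarith
  have hsqpos : 0 < Real.sqrt (1-t) := Real.sqrt_pos.2 h1
  rw [tendsto_iff_dist_tendsto_zero]
  have hmaj : Filter.Tendsto
      (fun n : ℕ => ((n:ℝ)^1 * t^n) / Real.sqrt (1-t) / Real.sqrt (1-t))
      Filter.atTop (nhds 0) := by
    simpa using ((tendsto_pow_const_mul_const_pow_of_lt_one 1 ht0 ht1).div_const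
      (Real.sqrt (1-t))).div_const (Real.sqrt (1-t))
  refine squeeze_zero' (Filter.Eventually.of_forall fun n => dist_nonneg) ?_ hmaj
  filter_upwards [Filter.eventually_ge_atTop 1] with n hn
  have hb := Q_bound n hn ht0 ht1
  have hfact : Real.sqrt (1-t) * P n t - 1 =
      (P n t - (Real.sqrt (1-t))⁻¹) * Real.sqrt (1-t) := by
    field_simp
  have habs : |Real.sqrt (1-t) * P n t - 1| =
      dist (P n t) ((Real.sqrt (1-t))⁻¹) * Real.sqrt (1-t) := by
    rw [hfact, abs_mul, abs_of_nonneg hsqpos.le, Real.dist_eq]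
  have hnum : (n:ℝ) * c n * t^n ≤ (n:ℝ)^1 * t^n := by
    rw [pow_one]
    calc (n:ℝ) * c n * t^n = (n:ℝ) * t^n * c n := by ring
      _ ≤ (n:ℝ) * t^n * 1 := mul_le_mul_of_nonneg_left (c_le_one n)
            (mul_nonneg (Nat.cast_nonneg n) (pow_nonneg ht0 n))
      _ = (n:ℝ) * t^n := mul_one _
  calc dist (P n t) ((Real.sqrt (1-t))⁻¹)
      = |Real.sqrt (1-t) * P n t - 1| / Real.sqrt (1-t) := by
        rw [habs, mul_div_cancel_right₀ _ hsqpos.ne']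
    _ ≤ ((n:ℝ) * c n * t^n / Real.sqrt (1-t)) / Real.sqrt (1-t) := by gcongr
    _ ≤ ((n:ℝ)^1 * t^n) / Real.sqrt (1-t) / Real.sqrt (1-t) := by gcongr

lemma hasSum_P {t : ℝ} (ht0 : 0 ≤ t) (ht1 : t < 1) :
    HasSum (fun k => c k * t^k) ((Real.sqrt (1-t))⁻¹) := by
  have hsum : Summable (fun k => c k * t^k) := by
    refine Summable.of_nonneg_of_le
      (fun k => mul_nonneg (c_pos k).le (pow_nonneg ht0 k)) (fun k => ?_)
      (summable_geometric_of_lt_one ht0 ht1)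
    calc c k * t^k ≤ 1 * t^k :=
          mul_le_mul_of_nonneg_right (c_le_one k) (pow_nonneg ht0 k)
      _ = t^k := one_mul _
  have h1 := hsum.hasSum
  have h2 := h1.tendsto_sum_nat
  have h3 := P_tendsto ht0 ht1
  have h4 : (∑' k, c k * t^k) = (Real.sqrt (1-t))⁻¹ := by
    refine tendsto_nhds_unique ?_ h3
    exact h2
  rwa [h4] at h1

lemma P_le {t : ℝ} (ht0 : 0 ≤ t) (ht1 : t < 1) (n : ℕ) :
    P n t ≤ (Real.sqrt (1-t))⁻¹ :=
  sum_le_hasSum (range n) (fun k _ => mul_nonneg (c_pos k).le (pow_nonneg ht0 k))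
    (hasSum_P ht0 ht1)

lemma tail_le {t : ℝ} (ht0 : 0 ≤ t) (ht1 : t < 1) (n : ℕ) :
    (Real.sqrt (1-t))⁻¹ - P n t ≤ t^n * (Real.sqrt (1-t))⁻¹ := by
  have hS := hasSum_P ht0 ht1
  have hsum := hS.summable
  have h1 : (Real.sqrt (1-t))⁻¹ - P n t = ∑' k, c (k+n) * t^(k+n) := by
    have := Summable.sum_add_tsum_nat_add (f := fun k => c k * t^k) n hsum
    rw [hS.tsum_eq] at this
    unfold P
    linarith [this]
  rw [h1]
  have hsum2 : Summable (fun k => c (k+n) * t^(k+n)) :=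
    (summable_nat_add_iff n).mpr hsum
  have hsum3 : Summable (fun k => (c k * t^k) * t^n) := hsum.mul_right _
  calc (∑' k, c (k+n) * t^(k+n)) ≤ ∑' k, (c k * t^k) * t^n := by
        refine Summable.tsum_le_tsum (fun k => ?_) hsum2 hsum3
        rw [pow_add]
        have h2 : c (k+n) ≤ c k := c_anti (Nat.le_add_right k n)
        calc c (k+n) * (t^k * t^n) ≤ c k * (t^k * t^n) :=
              mul_le_mul_of_nonneg_right h2
                (mul_nonneg (pow_nonneg ht0 k) (pow_nonneg ht0 n))
          _ = (c k * t^k) * t^n := by ring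
    _ = (∑' k, c k * t^k) * t^n := tsum_mul_right
    _ = t^n * (Real.sqrt (1-t))⁻¹ := by rw [hS.tsum_eq]; ring

lemma rpow_eq {t : ℝ} (ht1 : t ≤ 1) :
    (1-t) ^ (-(1:ℝ)/2) = (Real.sqrt (1-t))⁻¹ := by
  rw [neg_div, Real.rpow_neg (by linarith), Real.sqrt_eq_rpow]

end Stmt15

open Stmt15 in
/-- (i) For every `n ≥ 1` and `x ∈ (−1,1)`,
`0 ≤ A_n(x) ≤ (1−x²)^{−1/2}`, and hence `√(1−x²)·A_n(x) ≤ 1` on all of `[−1,1]`;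
(ii) if `0 < ε ≤ 1`, `0 < δ ≤ 1` and `n ≥ (2δ)^{−1}·log(1/(ε√δ))`, then
`|A_n(x) − (1−x²)^{−1/2}| ≤ ε` for all `x ∈ [−1+δ, 1−δ]`. -/
theorem stmt_15 (n : ℕ) (hn : 1 ≤ n) :
    (∀ x : ℝ, -1 < x → x < 1 →
      0 ≤ Apoly n x ∧ Apoly n x ≤ (1 - x ^ 2) ^ (-(1 : ℝ) / 2)) ∧
    (∀ x : ℝ, -1 ≤ x → x ≤ 1 → Real.sqrt (1 - x ^ 2) * Apoly n x ≤ 1) ∧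
    (∀ ε δ : ℝ, 0 < ε → ε ≤ 1 → 0 < δ → δ ≤ 1 →
      (2 * δ)⁻¹ * Real.log (1 / (ε * Real.sqrt δ)) ≤ (n : ℝ) →
      ∀ x : ℝ, -1 + δ ≤ x → x ≤ 1 - δ →
        |Apoly n x - (1 - x ^ 2) ^ (-(1 : ℝ) / 2)| ≤ ε) := by
  refine ⟨?_, ?_, ?_⟩
  · intro x hx1 hx2
    have ht0 : (0:ℝ) ≤ x^2 := sq_nonneg x
    have ht1 : x^2 < 1 := by nlinarith
    rw [Apoly_eq, rpow_eq ht1.le]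
    exact ⟨P_nonneg n ht0, P_le ht0 ht1 n⟩
  · intro x hx1 hx2
    have ht0 : (0:ℝ) ≤ x^2 := sq_nonneg x
    have ht1 : x^2 ≤ 1 := by nlinarith
    rw [Apoly_eq]
    rcases lt_or_eq_of_le ht1 with h | h
    · have hsqpos : 0 < Real.sqrt (1-x^2) := Real.sqrt_pos.2 (by linarith)
      calc Real.sqrt (1-x^2) * P n (x^2)
          ≤ Real.sqrt (1-x^2) * (Real.sqrt (1-x^2))⁻¹ :=
            mul_le_mul_of_nonneg_left (P_le ht0 h n) hsqpos.le
        _ = 1 := mul_inv_cancel₀ hsqpos.ne'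
    · rw [show (1:ℝ) - x^2 = 0 by rw [h]; ring, Real.sqrt_zero, zero_mul]
      norm_num
  · intro ε δ hε0 hε1 hδ0 hδ1 hN x hx1 hx2
    have hxabs : |x| ≤ 1 - δ := abs_le.2 ⟨by linarith, hx2⟩
    have ht : x^2 ≤ (1-δ)^2 := by
      rw [← sq_abs]
      exact pow_le_pow_left₀ (abs_nonneg x) hxabs 2
    have ht1 : x^2 < 1 := lt_of_le_of_lt ht (by nlinarith)
    have ht0 : (0:ℝ) ≤ x^2 := sq_nonneg x
    have h1x : δ ≤ 1 - x^2 := by nlinarith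
    have hsδ : 0 < Real.sqrt δ := Real.sqrt_pos.2 hδ0
    rw [Apoly_eq, rpow_eq ht1.le, abs_sub_comm,
      abs_of_nonneg (by linarith [P_le ht0 ht1 n] : (0:ℝ) ≤ (Real.sqrt (1-x^2))⁻¹ - P n (x^2))]
    have step1 := tail_le ht0 ht1 n
    have hsqx : Real.sqrt δ ≤ Real.sqrt (1-x^2) := Real.sqrt_le_sqrt h1x
    have hinv : (Real.sqrt (1-x^2))⁻¹ ≤ (Real.sqrt δ)⁻¹ :=
      inv_anti₀ hsδ hsqx
    have hpow : x^2 ≤ Real.exp (-(2*δ)) := by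
      have h2 : 1 - δ ≤ Real.exp (-δ) := by
        have := Real.add_one_le_exp (-δ)
        linarith
      calc x^2 ≤ (1-δ)^2 := ht
        _ ≤ (Real.exp (-δ))^2 := by
            apply pow_le_pow_left₀ (by linarith) h2
        _ = Real.exp (-(2*δ)) := by
            rw [← Real.exp_nat_mul]
            congr 1
            push_cast
            ring
    have hexp : Real.exp (-(2*δ)) ^ n = Real.exp (-(2*δ*n)) := by
      rw [← Real.exp_nat_mul]
      congr 1
      ring
    have hkey : Real.exp (-(2*δ*n)) ≤ ε * Real.sqrt δ := by
      have hpos : 0 < ε * Real.sqrt δ := by positivity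
      rw [← Real.exp_log hpos]
      apply Real.exp_le_exp.2
      have h3 : Real.log (1 / (ε * Real.sqrt δ)) ≤ 2 * δ * n := by
        have h4 : (0:ℝ) < 2*δ := by linarith
        calc Real.log (1 / (ε * Real.sqrt δ))
            = (2*δ) * ((2*δ)⁻¹ * Real.log (1 / (ε * Real.sqrt δ))) := by
              field_simp
          _ ≤ (2*δ) * n := by
              apply mul_le_mul_of_nonneg_left hN h4.le
          _ = 2 * δ * n := by ring
      rw [one_div, Real.log_inv] at h3
      linarith
    calc (Real.sqrt (1-x^2))⁻¹ - P n (x^2)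
        ≤ (x^2)^n * (Real.sqrt (1-x^2))⁻¹ := step1
      _ ≤ Real.exp (-(2*δ)) ^ n * (Real.sqrt δ)⁻¹ := by
          apply mul_le_mul (pow_le_pow_left₀ ht0 hpow n) hinv (by positivity)
            (by positivity)
      _ = Real.exp (-(2*δ*n)) * (Real.sqrt δ)⁻¹ := by rw [hexp]
      _ ≤ (ε * Real.sqrt δ) * (Real.sqrt δ)⁻¹ :=
          mul_le_mul_of_nonneg_right hkey (by positivity)
      _ = ε := by field_simp
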